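/- arXiv:1404.1639 — 8 statements merged into one kernel-verified Lean document; each statement's English description precedes it below -/
import Mathlib

section
/- The action of Sp(1)² on Sp(3) given by (p,q) • g = diag(p,p,p) · g · diag(1,1,q)⁻¹ is free: if diag(p,p,p) g = g diag(1,1,q) for some g ∈ Sp(3), then p = q = 1. -/
open Quaternion Matrix

/-! A matrix `g` with `g gᴴ = 1` over the quaternions also satisfies `gᴴ g = 1` (matrix rings
over a division ring are Dedekind-finite), so no column of `g` vanishes. Reading
`diag(p,p,p) g = g diag(1,1,q)` off column `0` gives `p x = x` for a nonzero entry `x`, whence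
`p = 1`; column `2` then gives `x = x q` for a nonzero `x`, whence `q = 1`. -/

theorem Matrix.exists_ne_zero_of_conjTranspose_mul_self_eq_one {R m n : Type*} [Semiring R]
    [Star R] [Nontrivial R] [Fintype m] [DecidableEq n] {g : Matrix m n R} (hg : gᴴ * g = 1)
    (j : n) : ∃ i, g i j ≠ 0 := by
  by_contra! hzero
  simpa [Matrix.mul_apply, hzero] using congrFun (congrFun hg j) j

theorem N2_action_free_general (p q : ℍ[ℝ])
    (g : Matrix (Fin 3) (Fin 3) ℍ[ℝ]) (hg : g * gᴴ = 1)
    (h : Matrix.diagonal ![p, p, p] * g = g * Matrix.diagonal ![1, 1, q]) :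
    p = 1 ∧ q = 1 := by
  have hg' : gᴴ * g = 1 := mul_eq_one_comm.mp hg
  have hentry : ∀ i j, p * g i j = g i j * ![1, 1, q] j := by
    intro i j
    have := congrFun (congrFun h i) j
    fin_cases i <;> simpa [diagonal_mul, mul_diagonal] using this
  have hp : p = 1 := by
    obtain ⟨i, hi⟩ := exists_ne_zero_of_conjTranspose_mul_self_eq_one hg' 0
    exact (mul_eq_right₀ hi).mp (by simpa using hentry i 0)
  refine ⟨hp, ?_⟩
  obtain ⟨i, hi⟩ := exists_ne_zero_of_conjTranspose_mul_self_eq_one hg' 2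
  exact (mul_eq_left₀ hi).mp (by simpa [hp] using (hentry i 2).symm)

/-- The biquotient action of `Sp(1)²` on `Sp(3)` via `(p,q) • g = diag(p,p,p) g diag(1,1,q)⁻¹`
is free: if `diag(p,p,p) g = g diag(1,1,q)` for some `g ∈ Sp(3)`, then `p = q = 1`. -/
theorem N2_action_free (p q : ℍ[ℝ]) (hp : ‖p‖ = 1) (hq : ‖q‖ = 1)
    (g : Matrix (Fin 3) (Fin 3) ℍ[ℝ]) (hg : g * gᴴ = 1)
    (h : Matrix.diagonal ![p, p, p] * g = g * Matrix.diagonal ![1, 1, q]) :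
    p = 1 ∧ q = 1 :=
  N2_action_free_general p q g hg h
end

section
/- The action of Sp(1)² on Sp(3) given by (p,q) • g = diag(p,p,1) · g · diag(1,1,q)⁻¹ is free: if diag(p,p,1) g = g diag(1,1,q) for some g ∈ Sp(3), then p = q = 1. -/
open Quaternion Matrix

set_option maxHeartbeats 1600000 in
/-- Three "orthonormal" rows in `ℍ²` are impossible: key quantitative bound. -/
private lemma aux_bound (a b d e u v : ℍ[ℝ])
    (h00 : a * star a + b * star b = 1)
    (h11 : d * star d + e * star e = 1)
    (h22 : u * star u + v * star v = 1)
    (h01 : a * star d + b * star e = 0)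
    (h02 : a * star u + b * star v = 0)
    (h12 : d * star u + e * star v = 0) :
    normSq a + normSq d + normSq u ≤ 1 := by
  have h10 : d * star a + e * star b = 0 := by
    have := congrArg star h01
    simpa [star_add, StarMul.star_mul] using this
  have h20 : u * star a + v * star b = 0 := by
    have := congrArg star h02
    simpa [star_add, StarMul.star_mul] using this
  have h21 : u * star d + v * star e = 0 := by
    have := congrArg star h12
    simpa [star_add, StarMul.star_mul] using this
  set E : ℍ[ℝ] := star a * a + star d * d + star u * u with hE
  set F : ℍ[ℝ] := star a * b + star d * e + star u * v with hF
  have expand : E * E + F * star F =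
      star a * ((a * star a + b * star b) * a)
      + star a * ((a * star d + b * star e) * d)
      + star a * ((a * star u + b * star v) * u)
      + star d * ((d * star a + e * star b) * a)
      + star d * ((d * star d + e * star e) * d)
      + star d * ((d * star u + e * star v) * u)
      + star u * ((u * star a + v * star b) * a)
      + star u * ((u * star d + v * star e) * d)
      + star u * ((u * star u + v * star v) * u) := by
    simp only [hE, hF, star_add, StarMul.star_mul, star_star]
    noncomm_ring
  rw [h00, h11, h22, h01, h02, h12, h10, h20, h21] at expand
  simp only [zero_mul, mul_zero, one_mul, add_zero, zero_add] at expand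
  have key : E * E + F * star F = E := by rw [expand, hE]
  have hEcoe : E = ((normSq a + normSq d + normSq u : ℝ) : ℍ[ℝ]) := by
    rw [hE, Quaternion.star_mul_self, Quaternion.star_mul_self, Quaternion.star_mul_self]
    norm_cast
  set s : ℝ := normSq a + normSq d + normSq u with hs
  have hre : s * s + normSq F = s := by
    rw [hEcoe, Quaternion.self_mul_star, ← Quaternion.coe_mul, ← Quaternion.coe_add] at key
    exact Quaternion.coe_injective key
  nlinarith [Quaternion.normSq_nonneg (a := F), Quaternion.normSq_nonneg (a := a),
    Quaternion.normSq_nonneg (a := d), Quaternion.normSq_nonneg (a := u)]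

set_option maxHeartbeats 1600000 in
/-- The biquotient action of `Sp(1)²` on `Sp(3)` via `(p,q) • g = diag(p,p,1) g diag(1,1,q)⁻¹`
is free: if `diag(p,p,1) g = g diag(1,1,q)` for some `g ∈ Sp(3)`, then `p = q = 1`. -/
theorem N1_action_free (p q : ℍ[ℝ]) (hp : ‖p‖ = 1) (hq : ‖q‖ = 1)
    (g : Matrix (Fin 3) (Fin 3) ℍ[ℝ]) (hg : g * gᴴ = 1)
    (h : Matrix.diagonal ![p, p, 1] * g = g * Matrix.diagonal ![1, 1, q]) :
    p = 1 ∧ q = 1 := by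
  -- entrywise form of h
  have hent : ∀ i j : Fin 3, (![p, p, 1] i) * g i j = g i j * (![1, 1, q] j) := by
    intro i j
    have := congrFun (congrFun h i) j
    rwa [Matrix.diagonal_mul, Matrix.mul_diagonal] at this
  -- entrywise form of hg
  have hgent : ∀ i j : Fin 3,
      g i 0 * star (g j 0) + g i 1 * star (g j 1) + g i 2 * star (g j 2)
        = if i = j then 1 else 0 := by
    intro i j
    have := congrFun (congrFun hg i) j
    rw [Matrix.mul_apply, Fin.sum_univ_three] at this
    simpa [Matrix.conjTranspose_apply, Matrix.one_apply] using this
  have hp1 : p = 1 := by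
    by_contra hpne
    have hzero : ∀ i j : Fin 3, i ≠ 2 → j ≠ 2 → g i j = 0 := by
      intro i j hi hj
      have hij := hent i j
      have hdi : ![p, p, 1] i = p := by
        fin_cases i <;> simp_all
      have hdj : ![(1 : ℍ[ℝ]), 1, q] j = 1 := by
        fin_cases j <;> simp_all
      rw [hdi, hdj, mul_one] at hij
      have : (p - 1) * g i j = 0 := by rw [sub_mul, one_mul, hij, sub_self]
      rcases mul_eq_zero.mp this with h' | h'
      · exact absurd (sub_eq_zero.mp h') hpne
      · exact h'
    have e00 : g 0 0 = 0 := hzero 0 0 (by decide) (by decide)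
    have e01 : g 0 1 = 0 := hzero 0 1 (by decide) (by decide)
    have e10 : g 1 0 = 0 := hzero 1 0 (by decide) (by decide)
    have e11 : g 1 1 = 0 := hzero 1 1 (by decide) (by decide)
    have h00 := hgent 0 0
    have h11 := hgent 1 1
    have h01 := hgent 0 1
    rw [e00, e01] at h00 h01
    rw [e10, e11] at h01
    rw [e10, e11] at h11
    simp only [zero_mul, mul_zero, star_zero, zero_add, add_zero, if_pos rfl] at h00 h11
    simp only [zero_mul, mul_zero, star_zero, zero_add, add_zero] at h01
    rw [if_neg (by decide)] at h01
    have hne0 : g 0 2 ≠ 0 := by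
      intro hc; rw [hc] at h00; simp at h00
    have hne1 : star (g 1 2) ≠ 0 := by
      intro hc
      rw [star_eq_zero] at hc
      rw [hc] at h11; simp at h11
    exact (mul_ne_zero hne0 hne1) h01
  refine ⟨hp1, ?_⟩
  by_contra hqne
  have hcol : ∀ i : Fin 3, g i 2 = 0 := by
    intro i
    have hij := hent i 2
    have hdi : ![p, p, 1] i = 1 := by
      fin_cases i <;> simp [hp1]
    have hdj : ![(1 : ℍ[ℝ]), 1, q] 2 = q := by simp
    rw [hdi, hdj, one_mul] at hij
    have : g i 2 * (q - 1) = 0 := by rw [mul_sub, mul_one, ← hij, sub_self]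
    rcases mul_eq_zero.mp this with h' | h'
    · exact h'
    · exact absurd (sub_eq_zero.mp h') hqne
  have hgent' : ∀ i j : Fin 3,
      g i 0 * star (g j 0) + g i 1 * star (g j 1) = if i = j then 1 else 0 := by
    intro i j
    have := hgent i j
    rwa [hcol i, zero_mul, add_zero] at this
  have h00 := hgent' 0 0
  have h11 := hgent' 1 1
  have h22 := hgent' 2 2
  rw [if_pos rfl] at h00 h11 h22
  have h01 := hgent' 0 1
  have h02 := hgent' 0 2
  have h12 := hgent' 1 2
  rw [if_neg (by decide)] at h01 h02 h12
  have b1 := aux_bound (g 0 0) (g 0 1) (g 1 0) (g 1 1) (g 2 0) (g 2 1)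
    h00 h11 h22 h01 h02 h12
  have b2 := aux_bound (g 0 1) (g 0 0) (g 1 1) (g 1 0) (g 2 1) (g 2 0)
    (by rw [add_comm]; exact h00) (by rw [add_comm]; exact h11)
    (by rw [add_comm]; exact h22) (by rw [add_comm]; exact h01)
    (by rw [add_comm]; exact h02) (by rw [add_comm]; exact h12)
  have n00 : normSq (g 0 0) + normSq (g 0 1) = 1 := by
    have := h00
    rw [Quaternion.self_mul_star, Quaternion.self_mul_star, ← Quaternion.coe_add, ← Quaternion.coe_one] at this
    exact Quaternion.coe_injective this
  have n11 : normSq (g 1 0) + normSq (g 1 1) = 1 := by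
    have := h11
    rw [Quaternion.self_mul_star, Quaternion.self_mul_star, ← Quaternion.coe_add, ← Quaternion.coe_one] at this
    exact Quaternion.coe_injective this
  have n22 : normSq (g 2 0) + normSq (g 2 1) = 1 := by
    have := h22
    rw [Quaternion.self_mul_star, Quaternion.self_mul_star, ← Quaternion.coe_add, ← Quaternion.coe_one] at this
    exact Quaternion.coe_injective this
  linarith
end

section
/- The biquotient action of the circle pair on Sp(3) given by left multiplication by diag(z,1,1) and inverse right multiplication by diag(z w², z w̄², z) is NOT effectively free: with z = -1 and w = i, the matrices diag(-1,1,1) and diag(-1·i², -1·(-i)², -1) = diag(1,1,-1) are conjugate in Sp(3) but are not both equal and central. -/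
open Quaternion Matrix

namespace Matrix

variable {n R : Type*} [DecidableEq n] [Fintype n] [NonAssocSemiring R]

lemma permMatrix_mul_conjTranspose_permMatrix [StarRing R] (σ : Equiv.Perm n) :
    σ.permMatrix R * (σ.permMatrix R)ᴴ = 1 := by
  rw [conjTranspose_permMatrix, ← permMatrix_mul, inv_mul_cancel, permMatrix_one]

lemma permMatrix_mul_diagonal (σ : Equiv.Perm n) (d : n → R) :
    σ.permMatrix R * diagonal d = diagonal (d ∘ σ) * σ.permMatrix R := by
  rw [PEquiv.toMatrix_toPEquiv_mul, PEquiv.mul_toMatrix_toPEquiv]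
  ext i j
  simp [diagonal_apply, Equiv.eq_symm_apply, eq_comm]

end Matrix

/-- The biquotient action with torus image `(diag(z,1,1), diag(z w², z w̄², z))` is not
effectively free: for `z = -1` and `w = i`, the matrices `diag(z,1,1) = diag(-1,1,1)` and
`diag(z w², z w̄², z) = diag(1,1,-1)` are conjugate in `Sp(3)` but not equal (hence not
both equal and central). -/
theorem not_effectively_free_N12_candidate :
    let z : ℍ[ℝ] := -1
    let w : ℍ[ℝ] := ⟨0, 1, 0, 0⟩
    (∃ g : Matrix (Fin 3) (Fin 3) ℍ[ℝ], g * gᴴ = 1 ∧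
        g * Matrix.diagonal ![z, 1, 1] =
          Matrix.diagonal ![z * w ^ 2, z * (star w) ^ 2, z] * g) ∧
      Matrix.diagonal ![z, 1, 1] ≠ Matrix.diagonal ![z * w ^ 2, z * (star w) ^ 2, z] := by
  intro z w
  have hw : w ^ 2 = -1 := by
    rw [sq_eq_neg_normSq.mpr rfl, normSq_def']
    norm_num [w]
  have hw' : star w ^ 2 = -1 := by rw [star_eq_neg.mpr rfl, neg_sq, hw]
  have hswap : ![z * w ^ 2, z * (star w) ^ 2, z] = ![z, 1, 1] ∘ Equiv.swap 0 2 := by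
    funext i
    fin_cases i <;> simp [z, hw, hw', Equiv.swap_apply_of_ne_of_ne]
  rw [hswap]
  refine ⟨⟨(Equiv.swap 0 2).permMatrix ℍ[ℝ], permMatrix_mul_conjTranspose_permMatrix _,
    permMatrix_mul_diagonal _ _⟩, fun h => ?_⟩
  have h0 : (-1 : ℍ[ℝ]) = 1 := by simpa [z] using congrFun (diagonal_injective h) 0
  exact absurd (congrArg QuaternionAlgebra.re h0) (by norm_num)
end

section
/- Let X, Y be 3×3 quaternionic matrices of the form X = [[0,0,0],[0,x₄,x₅],[0,-x̄₅,0]] and Y = [[0,y₂,y₃],[-ȳ₂,0,0],[-ȳ₃,0,0]] with x₄ purely imaginary. Then [X,Y] = 0 if and only if y₂ x₅ = 0 and y₂ x₄ = y₃ x̄₅. Moreover if X ≠ 0 and Y ≠ 0 and [X,Y]=0, then y₂ = 0 and x₅ = 0. -/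
open Quaternion Matrix

set_option maxHeartbeats 1000000 in
/-- For `X = [[0,0,0],[0,x₄,x₅],[0,-x̄₅,0]]` with `x₄` purely imaginary and
`Y = [[0,y₂,y₃],[-ȳ₂,0,0],[-ȳ₃,0,0]]`, one has `[X,Y] = 0` iff `y₂ x₅ = 0` and
`y₂ x₄ = y₃ x̄₅`; moreover if `X ≠ 0`, `Y ≠ 0` and `[X,Y] = 0` then `y₂ = 0` and
`x₅ = 0`. -/
theorem commuting_pair_structure_N4 (x₄ x₅ y₂ y₃ : ℍ[ℝ]) (hx₄ : x₄.re = 0) :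
    let X : Matrix (Fin 3) (Fin 3) ℍ[ℝ] := !![0, 0, 0; 0, x₄, x₅; 0, -star x₅, 0]
    let Y : Matrix (Fin 3) (Fin 3) ℍ[ℝ] := !![0, y₂, y₃; -star y₂, 0, 0; -star y₃, 0, 0]
    (X * Y - Y * X = 0 ↔ (y₂ * x₅ = 0 ∧ y₂ * x₄ = y₃ * star x₅)) ∧
      (X ≠ 0 → Y ≠ 0 → X * Y - Y * X = 0 → y₂ = 0 ∧ x₅ = 0) := by
  intro X Y
  have hs4 : star x₄ = -x₄ := by
    ext <;> simp [hx₄]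
  have key : X * Y - Y * X = 0 ↔ (y₂ * x₅ = 0 ∧ y₂ * x₄ = y₃ * star x₅) := by
    constructor
    · intro h
      have h01 := congrFun (congrFun h 0) 1
      have h02 := congrFun (congrFun h 0) 2
      simp [X, Y, Matrix.mul_apply, Fin.sum_univ_three] at h01 h02
      exact ⟨mul_eq_zero.mpr h02,
        (eq_of_sub_eq_zero (by rw [sub_eq_add_neg]; exact h01)).symm⟩
    · intro ⟨h1, h2⟩
      have h1' : star x₅ * star y₂ = 0 := by
        rw [← StarMul.star_mul, h1, star_zero]
      have h2' : x₄ * star y₂ = -(x₅ * star y₃) := by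
        have := congrArg star h2
        rw [StarMul.star_mul, StarMul.star_mul, hs4, star_star] at this
        rw [← this, neg_mul, neg_neg]
      show X * Y - Y * X = 0
      simp only [X, Y]
      refine Matrix.ext fun i j => ?_
      fin_cases i <;> fin_cases j <;>
        simp [Matrix.mul_apply, Fin.sum_univ_three, h1, h1', h2', ← h2]
  refine ⟨key, fun hX hY h => ?_⟩
  obtain ⟨h1, h2⟩ := key.mp h
  by_cases hx5 : x₅ = 0
  · subst hx5
    rcases (show y₂ = 0 ∨ x₄ = 0 by simpa using h2) with hy2 | hx4
    · exact ⟨hy2, rfl⟩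
    · exact absurd (Matrix.ext fun i j => by fin_cases i <;> fin_cases j <;> simp [X, hx4, Matrix.vecHead, Matrix.vecTail]) hX
  · rcases mul_eq_zero.mp h1 with hy2 | hx5'
    · subst hy2
      have hy3 : y₃ = 0 := by
        rcases mul_eq_zero.mp (show y₃ * star x₅ = 0 by simpa using h2.symm) with h | h
        · exact h
        · exact absurd (star_eq_zero.mp h) hx5
      exact absurd (Matrix.ext fun i j => by fin_cases i <;> fin_cases j <;> simp [Y, hy3, Matrix.vecHead, Matrix.vecTail]) hY
    · exact absurd hx5' hx5
end

section
/- Let x₁ ∈ Im ℍ and x₅, y₂, y₃ ∈ ℍ, and set X = [[x₁,0,0],[0,-x₁,x₅],[0,-x̄₅,0]] and Y = [[0,y₂,y₃],[-ȳ₂,0,0],[-ȳ₃,0,0]]. Then [X,Y] = 0 if and only if x₁ y₂ + y₂ x₁ + y₃ x̄₅ = 0 and x₁ y₃ - y₂ x₅ = 0. Moreover, if X ≠ 0 and Y ≠ 0 and [X,Y] = 0 then x₁ ≠ 0 and y₂ ≠ 0. -/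
open Quaternion Matrix

set_option maxHeartbeats 1600000

/-- For `X = [[x₁,0,0],[0,-x₁,x₅],[0,-x̄₅,0]]` with `x₁` purely imaginary and
`Y = [[0,y₂,y₃],[-ȳ₂,0,0],[-ȳ₃,0,0]]`, one has `[X,Y] = 0` iff
`x₁ y₂ + y₂ x₁ + y₃ x̄₅ = 0` and `x₁ y₃ - y₂ x₅ = 0`; moreover if `X ≠ 0`, `Y ≠ 0`
and `[X,Y] = 0` then `x₁ ≠ 0` and `y₂ ≠ 0`. -/
theorem commuting_pair_structure_N1 (x₁ x₅ y₂ y₃ : ℍ[ℝ]) (hx₁ : x₁.re = 0) :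
    let X : Matrix (Fin 3) (Fin 3) ℍ[ℝ] := !![x₁, 0, 0; 0, -x₁, x₅; 0, -star x₅, 0]
    let Y : Matrix (Fin 3) (Fin 3) ℍ[ℝ] := !![0, y₂, y₃; -star y₂, 0, 0; -star y₃, 0, 0]
    (X * Y - Y * X = 0 ↔ (x₁ * y₂ + y₂ * x₁ + y₃ * star x₅ = 0 ∧ x₁ * y₃ - y₂ * x₅ = 0)) ∧
      (X ≠ 0 → Y ≠ 0 → X * Y - Y * X = 0 → x₁ ≠ 0 ∧ y₂ ≠ 0) := by
  intro X Y
  have hstar : star x₁ = -x₁ := by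
    ext <;> simp [hx₁]
  have zmat : (!![0, 0, 0; 0, 0, 0; 0, 0, 0] : Matrix (Fin 3) (Fin 3) ℍ[ℝ]) = 0 := by
    refine Matrix.ext fun i j => ?_
    fin_cases i <;> fin_cases j <;> simp [Matrix.vecHead, Matrix.vecTail]
  have key : X * Y - Y * X =
      !![0, x₁ * y₂ + y₂ * x₁ + y₃ * star x₅, x₁ * y₃ - y₂ * x₅;
         x₁ * star y₂ + star y₂ * x₁ - x₅ * star y₃, 0, 0;
         star x₅ * star y₂ + star y₃ * x₁, 0, 0] := by
    refine Matrix.ext fun i j => ?_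
    fin_cases i <;> fin_cases j <;>
      simp [X, Y, Matrix.mul_apply, Fin.sum_univ_three, Matrix.vecHead, Matrix.vecTail] <;> noncomm_ring
  have hiff : X * Y - Y * X = 0 ↔
      (x₁ * y₂ + y₂ * x₁ + y₃ * star x₅ = 0 ∧ x₁ * y₃ - y₂ * x₅ = 0) := by
    rw [key]
    constructor
    · intro h
      have h01 := congrFun (congrFun h 0) 1
      have h02 := congrFun (congrFun h 0) 2
      simp only [Matrix.cons_val', Matrix.cons_val_zero, Matrix.cons_val_one, Matrix.head_cons,
        Matrix.empty_val', Matrix.cons_val_fin_one, Matrix.head_fin_const, Matrix.cons_val_two,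
        Matrix.tail_cons, Matrix.zero_apply] at h01 h02
      exact ⟨h01, h02⟩
    · rintro ⟨h1, h2⟩
      have e1 : x₁ * star y₂ + star y₂ * x₁ - x₅ * star y₃ =
          -(star (x₁ * y₂ + y₂ * x₁ + y₃ * star x₅)) := by
        simp only [star_add, StarMul.star_mul, star_star, hstar]
        noncomm_ring
      have e2 : star x₅ * star y₂ + star y₃ * x₁ = -(star (x₁ * y₃ - y₂ * x₅)) := by
        simp only [star_sub, StarMul.star_mul, star_star, hstar]
        noncomm_ring
      rw [h1, star_zero, neg_zero] at e1
      rw [h2, star_zero, neg_zero] at e2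
      rw [h1, h2, e1, e2, zmat]
  refine ⟨hiff, fun hX hY hc => ?_⟩
  obtain ⟨h1, h2⟩ := hiff.mp hc
  have hYzero : y₂ = 0 → y₃ = 0 → False := by
    intro a b
    apply hY
    show (!![0, y₂, y₃; -star y₂, 0, 0; -star y₃, 0, 0] : Matrix (Fin 3) (Fin 3) ℍ[ℝ]) = 0
    rw [a, b, star_zero, neg_zero, zmat]
  have hx1 : x₁ ≠ 0 := by
    intro hx
    have hx5 : x₅ ≠ 0 := by
      intro h5
      apply hX
      show (!![x₁, 0, 0; 0, -x₁, x₅; 0, -star x₅, 0] : Matrix (Fin 3) (Fin 3) ℍ[ℝ]) = 0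
      rw [hx, h5, star_zero, neg_zero, zmat]
    simp only [hx, zero_mul, mul_zero, zero_add, add_zero, zero_sub, neg_eq_zero] at h1 h2
    have hy2 : y₂ = 0 := by
      rcases mul_eq_zero.mp h2 with h | h
      · exact h
      · exact absurd h hx5
    have hy3 : y₃ = 0 := by
      rcases mul_eq_zero.mp h1 with h | h
      · exact h
      · exact absurd (star_eq_zero.mp h) hx5
    exact hYzero hy2 hy3
  refine ⟨hx1, fun hy => ?_⟩
  simp only [hy, mul_zero, zero_mul, add_zero, zero_add, sub_zero] at h1 h2
  have hy3 : y₃ = 0 := by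
    rcases mul_eq_zero.mp h2 with h | h
    · exact absurd h hx1
    · exact h
  exact hYzero hy hy3
end

section
/- For θ ∈ ℝ with θ not an integer multiple of π/2, let p = [[cos θ, sin θ, 0],[-sin θ, cos θ, 0],[0,0,1]]. Suppose X = [[0,0,0],[0,x₄,0],[0,0,0]] and Y = [[0,0,y₃],[0,0,0],[-ȳ₃,0,0]] are 3×3 quaternionic matrices with x₄ ∈ Im ℍ, y₃ ∈ ℍ. If the sp(1)⊕sp(2)-components (i.e. the (1,1)-entry together with the lower-right 2×2 block, keeping all off-block entries zero) of p⁻¹ X p and p⁻¹ Y p commute, then x₄ = 0 or y₃ = 0. -/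
open Quaternion Matrix

/-- The `𝔨 = sp(1) ⊕ sp(2)`-component of a 3×3 quaternionic matrix: keep the (1,1)-entry
and the lower-right 2×2 block, set all other entries to zero. -/
noncomputable def kComp (M : Matrix (Fin 3) (Fin 3) ℍ[ℝ]) : Matrix (Fin 3) (Fin 3) ℍ[ℝ] :=
  !![M 0 0, 0, 0; 0, M 1 1, M 1 2; 0, M 2 1, M 2 2]

/-- For `θ` not an integer multiple of `π/2` and `p` the rotation matrix
`[[cos θ, sin θ, 0],[-sin θ, cos θ, 0],[0,0,1]] ∈ Sp(3)` (so `p⁻¹ = pᵀ`), if the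
`𝔨`-components of `p⁻¹ X p` and `p⁻¹ Y p` commute, where `X = diag(0, x₄, 0)` with
`x₄ ∈ Im ℍ` and `Y` has `y₃` in position (1,3) and `-ȳ₃` in position (3,1), then
`x₄ = 0` or `y₃ = 0`. -/
theorem quasi_positive_point_N4_N5 (θ : ℝ) (hθ : ∀ n : ℤ, θ ≠ n * (Real.pi / 2))
    (x₄ y₃ : ℍ[ℝ]) (hx₄ : x₄.re = 0) :
    let p : Matrix (Fin 3) (Fin 3) ℍ[ℝ] :=
      !![(Real.cos θ : ℍ[ℝ]), (Real.sin θ : ℍ[ℝ]), 0;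
         (-Real.sin θ : ℝ), (Real.cos θ : ℍ[ℝ]), 0; 0, 0, 1]
    let X : Matrix (Fin 3) (Fin 3) ℍ[ℝ] := !![0, 0, 0; 0, x₄, 0; 0, 0, 0]
    let Y : Matrix (Fin 3) (Fin 3) ℍ[ℝ] := !![0, 0, y₃; 0, 0, 0; -star y₃, 0, 0]
    kComp (pᵀ * X * p) * kComp (pᵀ * Y * p) = kComp (pᵀ * Y * p) * kComp (pᵀ * X * p) →
      x₄ = 0 ∨ y₃ = 0 := by
  intro p X Y h
  have hs : Real.sin θ ≠ 0 := by
    rw [Real.sin_ne_zero_iff]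
    intro n hn
    exact hθ (2*n) (by rw [← hn]; push_cast; ring)
  have hc : Real.cos θ ≠ 0 := by
    rw [Real.cos_ne_zero_iff]
    intro n hn
    exact hθ (2*n+1) (by rw [hn]; push_cast; ring)
  have h12 := congrFun (congrFun h 1) 2
  simp [kComp, Matrix.mul_apply, Fin.sum_univ_three, Matrix.vecHead, Matrix.transpose_apply, p, X, Y] at h12
  rcases h12 with ((hx | hx) | hc') | hs' | hy
  · exact absurd ((Quaternion.coe_injective (by simpa using hx))) hc
  · exact Or.inl hx
  · exact absurd (Quaternion.coe_injective (by simpa using hc')) hc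
  · exact absurd (Quaternion.coe_injective (by simpa using hs')) hs
  · exact Or.inr hy
end

section
/- Let z, w be unit complex numbers. Suppose the multiset {z, z³, z} agrees (up to entrywise complex conjugation) with the multiset {w, w³, 1}. Then either z = w = 1, or z³ = 1 and (z = w or z = w̄); and in the latter case, if additionally z = w is imposed (the diagonal restriction), the resulting pair belongs to one of the free Sp(1)-actions, so the biquotient action defining N₉ is effectively free. -/
/-- If the multiset `{w, w³, 1}` agrees with `{z, z³, z}` up to permutation and
entrywise complex conjugation, where `z, w` are unit complex numbers, then either
`z = w = 1`, or `z³ = 1` and `z = w` or `z = w̄` (the core of the verification that the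
biquotient action defining `N₉` is effectively free). -/
theorem N9_effectively_free_core (z w : ℂ) (hz : ‖z‖ = 1) (hw : ‖w‖ = 1)
    (h : ∃ σ : Equiv.Perm (Fin 3), ∀ i,
      ![w, w ^ 3, (1 : ℂ)] i = ![z, z ^ 3, z] (σ i) ∨
        ![w, w ^ 3, (1 : ℂ)] i = starRingEnd ℂ (![z, z ^ 3, z] (σ i))) :
    (z = 1 ∧ w = 1) ∨ (z ^ 3 = 1 ∧ (z = w ∨ z = starRingEnd ℂ w)) := by
  obtain ⟨σ, h⟩ := h
  have hvec : ∀ j : Fin 3, j ≠ 1 → ![z, z ^ 3, z] j = z := by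
    intro j hj; fin_cases j <;> simp_all
  have h0 := h 0
  have h2 := h 2
  simp only [Matrix.cons_val_zero, Matrix.cons_val_one, Matrix.head_cons,
    Matrix.cons_val_two, Matrix.tail_cons] at h0 h2
  by_cases hσ2 : σ 2 = 1
  · -- 1 corresponds to z^3, so z^3 = 1 and w corresponds to z
    have hσ0 : σ 0 ≠ 1 := fun hc => by
      exact absurd (σ.injective (hc.trans hσ2.symm)) (by decide)
    rw [hσ2] at h2
    simp only [Matrix.cons_val_one, Matrix.head_cons] at h2
    have hz3 : z ^ 3 = 1 := by
      rcases h2 with h2 | h2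
      · exact h2.symm
      · have := congrArg (starRingEnd ℂ) h2
        simpa using this.symm
    rw [hvec (σ 0) hσ0] at h0
    exact Or.inr ⟨hz3, by
      rcases h0 with h0 | h0
      · exact Or.inl h0.symm
      · refine Or.inr ?_
        have := congrArg (starRingEnd ℂ) h0
        simpa using this.symm⟩
  · -- 1 corresponds to z, so z = 1, then everything is 1
    rw [hvec (σ 2) hσ2] at h2
    have hz1 : z = 1 := by
      rcases h2 with h2 | h2
      · exact h2.symm
      · have := congrArg (starRingEnd ℂ) h2
        simpa using this.symm
    subst hz1
    have hvals : ∀ j : Fin 3, ![(1:ℂ), 1 ^ 3, 1] j = 1 := by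
      intro j; fin_cases j <;> simp
    rw [hvals (σ 0)] at h0
    simp only [map_one] at h0
    exact Or.inl ⟨rfl, by rcases h0 with h0 | h0 <;> exact h0⟩
end

section
/- Let X, Y ∈ sp(2) (2×2 quaternionic matrices with X + X* = 0) with X₂₂ = Y₂₂ = 0 (viewing them as tangent vectors to Sp(2)/Sp(1) = S⁷). If [X,Y] = 0, then X and Y are linearly dependent over ℝ. -/
/-!
Write `X = !![a, b; -b⋆, 0]` and `Y = !![c, d; -d⋆, 0]` with `a`, `c` imaginary. The entries of
`X Y = Y X` give `a d = c b`, `b⋆ d = d⋆ b` and, once `b = d = 0`, `a c = c a`.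
If `b ≠ 0`, then `b⋆ d` is self-adjoint, hence a real number `r`, so `|b|² d = b b⋆ d = r b`;
cancelling `b` in `|b|² c b = a |b|² d = r a b` gives `|b|² c = r a`, i.e. `|b|² Y = r X`.
If `b = 0` and `a ≠ 0`, then `d = 0`, and `a⋆ c` is self-adjoint because `a` and `c` are imaginary
and commute, so `|a|² c = a (a⋆ c)` is again a real multiple of `a`.
-/

open Quaternion Matrix

theorem not_linearIndependent_pair_of_smul_eq {R M : Type*} [Ring R] [AddCommGroup M] [Module R M]
    {x y : M} {s t : R} (hs : s ≠ 0) (h : s • y = t • x) : ¬ LinearIndependent R ![x, y] :=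
  fun hli => hs <| neg_eq_zero.mp <|
    (LinearIndependent.pair_iff.mp hli t (-s) (by rw [neg_smul, h, add_neg_cancel])).2

namespace Quaternion

variable {R : Type*} [CommRing R]

theorem normSq_smul_eq_smul_of_star_mul_eq_coe {x y : ℍ[R]} {r : R} (h : star x * y = r) :
    normSq x • y = r • x := by
  rw [← coe_mul_eq_smul, ← self_mul_star, mul_assoc, h, mul_coe_eq_smul]

theorem normSq_smul_eq_re_smul_of_commute [NoZeroDivisors R] [CharZero R] {a c : ℍ[R]}
    (ha : star a = -a) (hc : star c = -c) (hac : a * c = c * a) :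
    normSq a • c = (star a * c).re • a :=
  normSq_smul_eq_smul_of_star_mul_eq_coe <| star_eq_self.mp <| by
    rw [star_mul, star_star, hc, ha, neg_mul, neg_mul, hac]

end Quaternion

namespace Matrix

theorem star_apply_eq_neg_of_add_conjTranspose_eq_zero {n A : Type*} [AddGroup A]
    [StarAddMonoid A] {X : Matrix n n A} (hX : X + Xᴴ = 0) (i j : n) :
    star (X j i) = -X i j :=
  eq_neg_of_add_eq_zero_right (congrFun (congrFun hX i) j)

section Sp2Tangent

variable {R : Type*} [CommRing R]

variable (R) in
def sp2Tangent : ℍ[R] × ℍ[R] →ₗ[R] Matrix (Fin 2) (Fin 2) ℍ[R] where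
  toFun p := !![p.1, p.2; -star p.2, 0]
  map_add' p q := by simp [of_add_of, add_comm]
  map_smul' r p := by simp [smul_of]

theorem sp2Tangent_apply (a b : ℍ[R]) : sp2Tangent R (a, b) = !![a, b; -star b, 0] := rfl

theorem exists_eq_sp2Tangent_of_add_conjTranspose_eq_zero {X : Matrix (Fin 2) (Fin 2) ℍ[R]}
    (hX : X + Xᴴ = 0) (h11 : X 1 1 = 0) :
    ∃ a b : ℍ[R], star a = -a ∧ X = sp2Tangent R (a, b) := by
  refine ⟨X 0 0, X 0 1, star_apply_eq_neg_of_add_conjTranspose_eq_zero hX 0 0, ?_⟩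
  have h10 : X 1 0 = -star (X 0 1) := by
    rw [star_apply_eq_neg_of_add_conjTranspose_eq_zero hX, neg_neg]
  ext i j : 1
  fin_cases i <;> fin_cases j <;> simp [sp2Tangent_apply, h10, h11]

end Sp2Tangent

theorem not_linearIndependent_of_commute_sp2Tangent {a b c d : ℍ[ℝ]} (ha : star a = -a)
    (hc : star c = -c) (hcomm : Commute (sp2Tangent ℝ (a, b)) (sp2Tangent ℝ (c, d))) :
    ¬ LinearIndependent ℝ ![(a, b), (c, d)] := by
  have entry (i j : Fin 2) := congrFun (congrFun hcomm.eq i) j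
  simp only [sp2Tangent_apply, mul_fin_two] at entry
  have h00 : a * c - b * star d = c * a - d * star b := by simpa [sub_eq_add_neg] using entry 0 0
  have h01 : a * d = c * b := by simpa using entry 0 1
  have h11 : star b * d = star d * b := by simpa using entry 1 1
  by_cases hb : b = 0
  · subst hb
    by_cases ha0 : a = 0
    · subst ha0
      exact fun hli => hli.ne_zero 0 rfl
    have hd : d = 0 := by simpa [ha0] using h01
    subst hd
    have hac : a * c = c * a := by simpa using h00
    have hpair : normSq a • (c, 0) = (star a * c).re • (a, (0 : ℍ[ℝ])) := by
      simp only [Prod.smul_mk, normSq_smul_eq_re_smul_of_commute ha hc hac, smul_zero]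
    exact not_linearIndependent_pair_of_smul_eq (normSq_ne_zero.mpr ha0) hpair
  · set r := (star b * d).re
    have hd : normSq b • d = r • b :=
      normSq_smul_eq_smul_of_star_mul_eq_coe (star_eq_self.mp (by rw [star_mul, star_star, h11]))
    have hc' : normSq b • c = r • a := mul_right_cancel₀ hb <| by
      rw [smul_mul_assoc, ← h01, ← mul_smul_comm, hd, mul_smul_comm, smul_mul_assoc]
    have hpair : normSq b • (c, d) = r • (a, b) := by rw [Prod.smul_mk, Prod.smul_mk, hc', hd]
    exact not_linearIndependent_pair_of_smul_eq (normSq_ne_zero.mpr hb) hpair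

end Matrix

/-- If `X, Y ∈ sp(2)` (2×2 quaternionic matrices with `X + X* = 0`) have vanishing
(2,2)-entry (so they represent tangent vectors to `Sp(2)/Sp(1) = S⁷`) and commute,
then they are linearly dependent over `ℝ`. -/
theorem sp2_commuting_tangent_vectors_dependent (X Y : Matrix (Fin 2) (Fin 2) ℍ[ℝ])
    (hX : X + Xᴴ = 0) (hY : Y + Yᴴ = 0)
    (hX2 : X 1 1 = 0) (hY2 : Y 1 1 = 0)
    (hcomm : X * Y = Y * X) :
    ¬ LinearIndependent ℝ ![X, Y] := by
  obtain ⟨a, b, ha, rfl⟩ := exists_eq_sp2Tangent_of_add_conjTranspose_eq_zero hX hX2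
  obtain ⟨c, d, hc, rfl⟩ := exists_eq_sp2Tangent_of_add_conjTranspose_eq_zero hY hY2
  refine fun hli =>
    not_linearIndependent_of_commute_sp2Tangent ha hc hcomm (.of_comp (sp2Tangent ℝ) ?_)
  rwa [← FinVec.map_eq]
end
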